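/- Let A ⊆ ℝ≥0 be a closed bounded set of nonzero Lebesgue measure, let b > 0, let K be a positive integer and 0 ≤ δ < 1 with λ(A)/b = K(K−1)/2 + Kδ, and suppose K_A = K, where K_A is defined from the sets Ã_k. Then μ(Ã_K) = δ·b + (1/K)·Σ_{k=1}^{K−1} k·(μ(Ã_{k+1}) − μ(Ã_k) + b). -/

import Mathlib

open MeasureTheory Set Pointwise

/-- `Ẽ_k = {x ∈ [0,1) : #{n ∈ ℕ : n + x ∈ E} ≥ k}`. -/
def tildeSet (E : Set ℝ) (k : ℕ) : Set ℝ :=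
  {x ∈ Set.Ico (0 : ℝ) 1 | k ≤ {n : ℕ | (n : ℝ) + x ∈ E}.ncard}

/-- `K_E = sup {k ∈ ℕ : Ẽ_k ≠ ∅}`. -/
noncomputable def KE (E : Set ℝ) : ℕ := sSup {k : ℕ | tildeSet E k ≠ ∅}

/-!
For `x ∈ [0,1)` let `c(x)` count the integers `n ≥ 0` with `n + x ∈ A`. Cutting `A` into the slices
`A ∩ [n, n+1)` and translating each to `[0,1)` gives `λ(A) = ∫_{[0,1)} c`, and since the `Ã_k` are the
superlevel sets `{c ≥ k}` of this `ℕ`-valued function, the layer-cake formula reads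
`λ(A) = Σ_{k=1}^{K_A} μ(Ã_k)`. Boundedness of `A` keeps `c` finite, so that it agrees with the `ncard`
in `tildeSet` (an infinite set has `ncard = 0`). The claimed identity is this relation with
`λ(A) = (K(K-1)/2 + Kδ) b`, rewritten by Abel summation.
-/

open scoped ENNReal

theorem lintegral_natCast_eq_sum_measure_le {α : Type*} [MeasurableSpace α] {μ : Measure α}
    {f : α → ℕ} (hf : Measurable f) {N : ℕ} (hfN : ∀ x, f x ≤ N) :
    ∫⁻ x, (f x : ℝ≥0∞) ∂μ = ∑ k ∈ Finset.Icc 1 N, μ {x | k ≤ f x} := by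
  have hlevel (k : ℕ) : MeasurableSet {x | k ≤ f x} := hf measurableSet_Ici
  have hsum (x : α) : (f x : ℝ≥0∞) = ∑ k ∈ Finset.Icc 1 N, {x | k ≤ f x}.indicator 1 x := by
    have hIcc : {k ∈ Finset.Icc 1 N | k ≤ f x} = Finset.Icc 1 (f x) := by
      ext k
      simp only [Finset.mem_filter, Finset.mem_Icc]
      have := hfN x
      omega
    simp only [indicator_apply, mem_ofPred_eq, Pi.one_apply, ← Finset.natCast_card_filter, hIcc,
      Nat.card_Icc, add_tsub_cancel_right]
  simp_rw [hsum]
  rw [lintegral_finsetSum _ fun k _ => measurable_one.indicator (hlevel k)]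
  exact Finset.sum_congr rfl fun k _ => lintegral_indicator_one (hlevel k)

theorem volume_eq_sum_volume_inter_Ico_natCast {E : Set ℝ} {N : ℕ} (hEm : MeasurableSet E)
    (hE : E ⊆ Ico 0 N) :
    volume E = ∑ n ∈ Finset.range N, volume (E ∩ Ico (n : ℝ) (n + 1)) := by
  have hunion : E = ⋃ n ∈ Finset.range N, E ∩ Ico (n : ℝ) (n + 1) := by
    ext x
    simp only [mem_iUnion, Finset.mem_range, mem_inter_iff, exists_prop]
    refine ⟨fun hx => ?_, fun ⟨_, _, hx, _⟩ => hx⟩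
    obtain ⟨hx0, hxN⟩ := hE hx
    exact ⟨⌊x⌋₊, (Nat.floor_lt hx0).2 hxN, hx, (Nat.floor_eq_iff hx0).1 rfl⟩
  have hdisj : (Finset.range N : Set ℕ).PairwiseDisjoint fun n => E ∩ Ico (n : ℝ) (n + 1) := by
    intro m _ n _ hmn
    have := pairwise_disjoint_Ico_intCast ℝ (Int.ofNat_inj.not.2 hmn)
    simp only [Function.onFun, Int.cast_natCast] at this
    exact this.mono inter_subset_right inter_subset_right
  conv_lhs => rw [hunion]
  exact measure_biUnion_finset hdisj fun n _ => hEm.inter measurableSet_Ico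

open Classical in
noncomputable def countTranslates (E : Set ℝ) (N : ℕ) (x : ℝ) : ℕ :=
  ((Finset.range N).filter fun n : ℕ => (n : ℝ) + x ∈ E).card

section countTranslates

variable {E : Set ℝ} {N : ℕ}

theorem countTranslates_le (x : ℝ) : countTranslates E N x ≤ N := by
  classical exact (Finset.card_filter_le _ _).trans (Finset.card_range N).le

theorem natCast_countTranslates (x : ℝ) :
    (countTranslates E N x : ℝ≥0∞)
      = ∑ n ∈ Finset.range N, ((fun y => (n : ℝ) + y) ⁻¹' E).indicator 1 x := by
  classical
  simp only [countTranslates, Finset.natCast_card_filter, indicator_apply, mem_preimage,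
    Pi.one_apply]

theorem measurable_countTranslates (hEm : MeasurableSet E) : Measurable (countTranslates E N) := by
  classical
  have hsum :
      countTranslates E N = fun x => ∑ n ∈ Finset.range N, if (n : ℝ) + x ∈ E then 1 else 0 := by
    funext x
    exact Finset.card_filter _ _
  rw [hsum]
  exact Finset.measurable_sum _ fun n _ =>
    Measurable.ite (hEm.preimage (measurable_const_add _)) measurable_const measurable_const

theorem ncard_setOf_add_mem_eq_countTranslates (hE : E ⊆ Ico 0 N) {x : ℝ} (hx : 0 ≤ x) :
    {n : ℕ | (n : ℝ) + x ∈ E}.ncard = countTranslates E N x := by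
  classical
  have : {n : ℕ | (n : ℝ) + x ∈ E} = ↑((Finset.range N).filter fun n : ℕ => (n : ℝ) + x ∈ E) := by
    ext n
    simp only [Finset.coe_filter, Finset.mem_range, mem_ofPred_eq, iff_and_self]
    intro hn
    exact_mod_cast (le_add_of_nonneg_right hx).trans_lt (hE hn).2
  rw [this, ncard_coe_finset, countTranslates]

theorem tildeSet_eq_setOf_le_countTranslates (hE : E ⊆ Ico 0 N) (k : ℕ) :
    tildeSet E k = {x | k ≤ countTranslates E N x} ∩ Ico 0 1 := by
  ext x
  simp only [tildeSet, mem_ofPred_eq, mem_inter_iff]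
  refine ⟨fun ⟨hx, hk⟩ => ⟨?_, hx⟩, fun ⟨hk, hx⟩ => ⟨hx, ?_⟩⟩
  · rwa [← ncard_setOf_add_mem_eq_countTranslates hE hx.1]
  · rwa [ncard_setOf_add_mem_eq_countTranslates hE hx.1]

theorem tildeSet_eq_empty_of_lt (hE : E ⊆ Ico 0 N) {k : ℕ} (hk : N < k) : tildeSet E k = ∅ := by
  rw [tildeSet_eq_setOf_le_countTranslates hE, eq_empty_iff_forall_notMem]
  exact fun x hx => (hk.trans_le hx.1).not_ge (countTranslates_le x)

theorem lintegral_countTranslates (hEm : MeasurableSet E) (hE : E ⊆ Ico 0 N) :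
    ∫⁻ x in Ico 0 1, (countTranslates E N x : ℝ≥0∞) = volume E := by
  have hslice (n : ℕ) : MeasurableSet ((fun y => (n : ℝ) + y) ⁻¹' E) :=
    hEm.preimage (measurable_const_add _)
  simp_rw [natCast_countTranslates]
  rw [lintegral_finsetSum _ fun n _ => measurable_one.indicator (hslice n),
    volume_eq_sum_volume_inter_Ico_natCast hEm hE]
  refine Finset.sum_congr rfl fun n _ => ?_
  rw [lintegral_indicator_one (hslice n), Measure.restrict_apply (hslice n),
    ← measure_preimage_add volume (n : ℝ) (E ∩ _), preimage_inter, preimage_const_add_Ico]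
  simp

theorem volume_eq_sum_volume_tildeSet (hEm : MeasurableSet E) (hE : E ⊆ Ico 0 N) :
    volume E = ∑ k ∈ Finset.Icc 1 N, volume (tildeSet E k) := by
  rw [← lintegral_countTranslates hEm hE, lintegral_natCast_eq_sum_measure_le
    (measurable_countTranslates hEm) countTranslates_le]
  refine Finset.sum_congr rfl fun k _ => ?_
  rw [tildeSet_eq_setOf_le_countTranslates hE]
  exact Measure.restrict_apply (measurable_countTranslates hEm measurableSet_Ici)

end countTranslates

section KE

variable {E : Set ℝ}

theorem exists_subset_Ico_natCast (hbdd : Bornology.IsBounded E) (hpos : E ⊆ {x | 0 ≤ x}) :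
    ∃ N : ℕ, E ⊆ Ico 0 N := by
  obtain ⟨R, hR⟩ := hbdd.bddAbove
  obtain ⟨N, hN⟩ := exists_nat_gt R
  exact ⟨N, fun x hx => ⟨hpos hx, (hR hx).trans_lt hN⟩⟩

theorem tildeSet_eq_empty_of_KE_lt (hbdd : Bornology.IsBounded E) (hpos : E ⊆ {x | 0 ≤ x})
    {k : ℕ} (hk : KE E < k) : tildeSet E k = ∅ := by
  obtain ⟨N, hN⟩ := exists_subset_Ico_natCast hbdd hpos
  have hbddAbove : BddAbove {k : ℕ | tildeSet E k ≠ ∅} :=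
    ⟨N, fun j hj => not_lt.1 fun hNj => hj (tildeSet_eq_empty_of_lt hN hNj)⟩
  by_contra hne
  exact (le_csSup hbddAbove hne).not_gt hk

theorem volume_eq_sum_volume_tildeSet_KE (hEm : MeasurableSet E) (hbdd : Bornology.IsBounded E)
    (hpos : E ⊆ {x | 0 ≤ x}) :
    volume E = ∑ k ∈ Finset.Icc 1 (KE E), volume (tildeSet E k) := by
  obtain ⟨N, hN⟩ := exists_subset_Ico_natCast hbdd hpos
  have hN' : E ⊆ Ico 0 (max N (KE E) : ℕ) :=
    hN.trans (Ico_subset_Ico_right (by exact_mod_cast le_max_left _ _))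
  rw [volume_eq_sum_volume_tildeSet hEm hN']
  refine (Finset.sum_subset (Finset.Icc_subset_Icc_right (le_max_right _ _)) ?_).symm
  intro k hkN hkK
  have hk : KE E < k := by
    simp only [Finset.mem_Icc] at hkN hkK
    omega
  rw [tildeSet_eq_empty_of_KE_lt hbdd hpos hk, measure_empty]

end KE

theorem volume_tildeSet_ne_top (E : Set ℝ) (k : ℕ) : volume (tildeSet E k) ≠ ∞ :=
  ((measure_mono fun _ hx => hx.1).trans_lt measure_Ico_lt_top).ne

theorem sum_Icc_mul_sub_add (a : ℕ → ℝ) (b : ℝ) (m : ℕ) :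
    ∑ k ∈ Finset.Icc 1 m, (k : ℝ) * (a (k + 1) - a k + b)
      = m * a (m + 1) - ∑ k ∈ Finset.Icc 1 m, a k + m * (m + 1) / 2 * b := by
  induction m with
  | zero => simp
  | succ m ih =>
    rw [Finset.sum_Icc_succ_top (by omega), Finset.sum_Icc_succ_top (by omega), ih]
    push_cast
    ring

theorem apply_top_eq_of_sum_Icc_eq {a : ℕ → ℝ} {b δ : ℝ} {K : ℕ} (hK : 1 ≤ K)
    (hsum : ∑ k ∈ Finset.Icc 1 K, a k = ((K : ℝ) * ((K : ℝ) - 1) / 2 + K * δ) * b) :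
    a K = δ * b + 1 / (K : ℝ) * ∑ k ∈ Finset.Icc 1 (K - 1), (k : ℝ) * (a (k + 1) - a k + b) := by
  obtain ⟨m, rfl⟩ : ∃ m, K = m + 1 := ⟨K - 1, by omega⟩
  rw [Finset.sum_Icc_succ_top hK] at hsum
  rw [Nat.add_sub_cancel, sum_Icc_mul_sub_add]
  push_cast at hsum ⊢
  field_simp
  linarith

theorem measure_tilde_top_general (A : Set ℝ)
    (hAcl : IsClosed A) (hAbd : Bornology.IsBounded A)
    (hApos : A ⊆ {x : ℝ | 0 ≤ x})
    (b : ℝ) (hb : 0 < b)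
    (K : ℕ) (hK : 1 ≤ K) (δ : ℝ)
    (hKδ : (volume A).toReal / b = (K : ℝ) * ((K : ℝ) - 1) / 2 + (K : ℝ) * δ)
    (hKA : KE A = K) :
    (volume (tildeSet A K)).toReal
      = δ * b + 1 / (K : ℝ)
        * ∑ k ∈ Finset.Icc 1 (K - 1), (k : ℝ)
            * ((volume (tildeSet A (k + 1))).toReal
              - (volume (tildeSet A k)).toReal + b) := by
  refine apply_top_eq_of_sum_Icc_eq (a := fun k => (volume (tildeSet A k)).toReal) hK ?_
  have hvol := volume_eq_sum_volume_tildeSet_KE hAcl.measurableSet hAbd hApos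
  rw [hKA] at hvol
  rw [← hKδ, div_mul_cancel₀ _ hb.ne', hvol,
    ENNReal.toReal_sum fun k _ => volume_tildeSet_ne_top A k]

/-- Lemma on the measure of the top level `Ã_K`:
`μ(Ã_K) = δb + (1/K) Σ_{k=1}^{K-1} k·(μ(Ã_{k+1}) - μ(Ã_k) + b)`. -/
theorem measure_tilde_top (A : Set ℝ)
    (hAcl : IsClosed A) (hAbd : Bornology.IsBounded A)
    (hA0 : volume A ≠ 0) (hApos : A ⊆ {x : ℝ | 0 ≤ x})
    (b : ℝ) (hb : 0 < b)
    (K : ℕ) (hK : 1 ≤ K) (δ : ℝ) (hδ0 : 0 ≤ δ) (hδ1 : δ < 1)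
    (hKδ : (volume A).toReal / b = (K : ℝ) * ((K : ℝ) - 1) / 2 + (K : ℝ) * δ)
    (hKA : KE A = K) :
    (volume (tildeSet A K)).toReal
      = δ * b + 1 / (K : ℝ)
        * ∑ k ∈ Finset.Icc 1 (K - 1), (k : ℝ)
            * ((volume (tildeSet A (k + 1))).toReal
              - (volume (tildeSet A k)).toReal + b) :=
  measure_tilde_top_general A hAcl hAbd hApos b hb K hK δ hKδ hKA
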